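/- arXiv:1412.4456 — 2 statements merged into one kernel-verified Lean document; each statement's English description precedes it below -/
import Mathlib

section
/- Every Shapley cost sharing game possesses a pure Nash equilibrium, i.e., there exists a strategy vector P such that C_i(P) ≤ C_i(P_{−i}, Q_i) for every player i and every Q_i ∈ 𝒫_i. Moreover, any strategy vector minimizing the potential Φ(P) = Σ_{r ∈ R} Σ_{∅ ≠ T ⊆ P^r} ((|P^r| − |T|)! (|T| − 1)! / |P^r|!) · C^r(T) is a pure Nash equilibrium. -/
open Finset

def preSet {N : Type*} [DecidableEq N] (S : Finset N)
    (π : {x // x ∈ S} ≃ Fin S.card) (i : {x // x ∈ S}) : Finset N :=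
  (S.attach.filter (fun j => π j < π i)).image Subtype.val

noncomputable def shapley {N : Type*} [DecidableEq N]
    (C : Finset N → ℝ) (S : Finset N) (i : N) : ℝ :=
  if hi : i ∈ S then
    (1 / (Nat.factorial S.card : ℝ)) *
      ∑ π : {x // x ∈ S} ≃ Fin S.card,
        (C (preSet S π ⟨i, hi⟩ ∪ {i}) - C (preSet S π ⟨i, hi⟩))
  else 0

/-- `users P r = P^r = {i : r ∈ P_i}`, the set of players using resource `r`. -/
def users {n : ℕ} {R : Type*} [DecidableEq R]
    (P : Fin n → Finset R) (r : R) : Finset (Fin n) :=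
  Finset.univ.filter (fun i => r ∈ P i)

/-- The private cost of player `i` under Shapley cost sharing:
`C_i(P) = Σ_{r ∈ P_i} φ_i(C^r, P^r)`. -/
noncomputable def privCost {n : ℕ} {R : Type*} [DecidableEq R]
    (Cr : R → Finset (Fin n) → ℝ) (P : Fin n → Finset R) (i : Fin n) : ℝ :=
  ∑ r ∈ P i, shapley (Cr r) (users P r) i

/-- The social cost `C(P) = Σ_{r ∈ R} C^r(P^r)`. -/
noncomputable def socCost {n : ℕ} {R : Type*} [Fintype R] [DecidableEq R]
    (Cr : R → Finset (Fin n) → ℝ) (P : Fin n → Finset R) : ℝ :=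
  ∑ r : R, Cr r (users P r)

/-- The Shapley potential
`Φ(P) = Σ_{r ∈ R} Σ_{∅ ≠ T ⊆ P^r} ((|P^r|-|T|)!(|T|-1)!/|P^r|!) · C^r(T)`. -/
noncomputable def pot {n : ℕ} {R : Type*} [Fintype R] [DecidableEq R]
    (Cr : R → Finset (Fin n) → ℝ) (P : Fin n → Finset R) : ℝ :=
  ∑ r : R, ∑ T ∈ (users P r).powerset.filter (fun T => T.Nonempty),
    ((Nat.factorial ((users P r).card - T.card) : ℝ) *
        (Nat.factorial (T.card - 1) : ℝ) / (Nat.factorial (users P r).card : ℝ)) *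
      Cr r T

/-- `P` is a pure Nash equilibrium of the Shapley cost sharing game. -/
def isPNE {n : ℕ} {R : Type*} [DecidableEq R]
    (Strat : Fin n → Set (Finset R)) (Cr : R → Finset (Fin n) → ℝ)
    (P : Fin n → Finset R) : Prop :=
  (∀ i, P i ∈ Strat i) ∧
    ∀ i, ∀ Q ∈ Strat i, privCost Cr P i ≤ privCost Cr (Function.update P i Q) i

/-- `H_k`, the `k`-th harmonicNum number. -/
noncomputable def harmonicNum (k : ℕ) : ℝ := ∑ l ∈ Finset.Icc 1 k, (1 / (l : ℝ))

/-!
Grouping the orderings in the definition of `φ_i(C, S)` by the set `A` of predecessors of `i`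
(each fibre has `|A|! (|S| - 1 - |A|)!` elements: it is a torsor under the permutations preserving
the three blocks "before `i`", "`i`", "after `i`") gives
`φ_i(C, S) = Σ_{A ⊆ S ∖ i} w(|S|, |A| + 1) (C(A ∪ i) - C(A))` with `w(s, t) = (s - t)! (t - 1)! / s!`.
A coefficient identity turns this into `Ψ(S) - Ψ(S ∖ i)` for the Hart–Mas-Colell potential
`Ψ(S) = Σ_{∅ ≠ T ⊆ S} w(|S|, |T|) C(T)`. Hence `Φ(P) - C_i(P) = Σ_r Ψ_r(P^r ∖ i)` does not depend
on `P_i`, so `Φ` is an exact potential and any minimiser of `Φ` over the finite strategy space is a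
pure Nash equilibrium.
-/

theorem Fintype.card_equiv_comp_eq {α β ι : Type*} [Fintype α] [Fintype β] [DecidableEq α]
    [DecidableEq β] [Fintype ι] [DecidableEq ι] (f : α → ι) (g : β → ι)
    (h : ∀ o, Fintype.card {a // f a = o} = Fintype.card {b // g b = o}) :
    Fintype.card {π : α ≃ β // g ∘ π = f} = ∏ o, (Fintype.card {a // f a = o}).factorial := by
  set π₀ : α ≃ β := Equiv.ofFiberEquiv fun o => Fintype.equivOfCardEq (h o)
  have hπ₀ : ∀ a, g (π₀ a) = f a := Equiv.ofFiberEquiv_map _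
  rw [← DomMulAct.stabilizer_card f]
  refine Fintype.card_congr ((Equiv.equivCongr (Equiv.refl α) π₀.symm).subtypeEquiv fun π => ?_)
  have hcomp : f ∘ (Equiv.equivCongr (Equiv.refl α) π₀.symm π) = g ∘ π := by
    ext a
    simp [← hπ₀]
  rw [hcomp]

theorem Equiv.card_filter_apply_lt {α : Type*} [Fintype α] {s : ℕ} (π : α ≃ Fin s) (I : α) :
    #{j | π j < π I} = π I := by
  rw [← Fin.card_Iio (π I)]
  exact card_equiv π fun j => by simp

section OrdLabel

variable {α : Type*} [DecidableEq α]

def ordLabel (A : Finset α) (I j : α) : Ordering :=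
  if j ∈ A then .lt else if j = I then .eq else .gt

variable {A : Finset α} {I j : α}

theorem ordLabel_eq_lt_iff : ordLabel A I j = .lt ↔ j ∈ A := by
  unfold ordLabel; split_ifs <;> simp_all

theorem ordLabel_eq_eq_iff (hI : I ∉ A) : ordLabel A I j = .eq ↔ j = I := by
  unfold ordLabel; split_ifs <;> grind

theorem ordLabel_eq_gt_iff : ordLabel A I j = .gt ↔ j ∉ insert I A := by
  unfold ordLabel; split_ifs <;> simp_all

variable [Fintype α]

theorem card_ordLabel_eq_lt : Fintype.card {j // ordLabel A I j = .lt} = #A := by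
  rw [Fintype.card_congr (Equiv.subtypeEquivRight fun _ => ordLabel_eq_lt_iff),
    Fintype.card_coe]

theorem card_ordLabel_eq_eq (hI : I ∉ A) : Fintype.card {j // ordLabel A I j = .eq} = 1 := by
  rw [Fintype.card_congr (Equiv.subtypeEquivRight fun _ => ordLabel_eq_eq_iff hI),
    Fintype.card_subtype_eq]

theorem card_ordLabel_eq_gt (hI : I ∉ A) :
    Fintype.card {j // ordLabel A I j = .gt} = Fintype.card α - 1 - #A := by
  rw [Fintype.card_congr (Equiv.subtypeEquivRight fun _ => ordLabel_eq_gt_iff),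
    Fintype.card_subtype_compl, Fintype.card_coe, card_insert_of_notMem hI]
  omega

theorem ordLabel_Iio_apply {s : ℕ} (π : α ≃ Fin s) (I j : α) :
    ordLabel (Iio (π I)) (π I) (π j) = ordLabel ({j | π j < π I} : Finset α) I j := by
  simp [ordLabel]

theorem filter_apply_lt_eq_iff {s : ℕ} (π : α ≃ Fin s) (hI : I ∉ A) {k : Fin s}
    (hk : #A = k) :
    ({j | π j < π I} : Finset α) = A ↔ ordLabel (Iio k) k ∘ π = ordLabel A I := by
  constructor
  · intro h
    -- `I` has exactly `#A` predecessors, so it sits at position `#A`.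
    have hπI : π I = k := Fin.ext (by rw [← π.card_filter_apply_lt, h, hk])
    ext1 j
    rw [Function.comp_apply, ← hπI, ordLabel_Iio_apply, h]
  · intro h
    have hπI : π I = k := by
      have := congrFun h I
      rwa [Function.comp_apply, (ordLabel_eq_eq_iff hI).2 rfl,
        ordLabel_eq_eq_iff (by simp)] at this
    ext j
    rw [← ordLabel_eq_lt_iff (A := A) (I := I), ← congrFun h j, Function.comp_apply,
      ordLabel_eq_lt_iff, hπI]
    simp

theorem card_filter_apply_lt_eq {s : ℕ} (hs : Fintype.card α = s) (hI : I ∉ A) :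
    Fintype.card {π : α ≃ Fin s // ({j | π j < π I} : Finset α) = A} =
      (#A).factorial * (s - 1 - #A).factorial := by
  have hA : #A < s := hs ▸ card_lt_univ_of_notMem hI
  let k : Fin s := ⟨#A, hA⟩
  have hk : k ∉ Iio k := by simp
  rw [Fintype.card_congr
      (Equiv.subtypeEquivRight fun π => filter_apply_lt_eq_iff π hI (k := k) rfl),
    Fintype.card_equiv_comp_eq]
  · rw [show (univ : Finset Ordering) = {.lt, .eq, .gt} from rfl]
    simp [card_ordLabel_eq_lt, card_ordLabel_eq_eq hI, card_ordLabel_eq_gt hI, hs]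
  · intro o
    cases o
    · rw [card_ordLabel_eq_lt, card_ordLabel_eq_lt, Fin.card_Iio]
    · rw [card_ordLabel_eq_eq hI, card_ordLabel_eq_eq hk]
    · rw [card_ordLabel_eq_gt hI, card_ordLabel_eq_gt hk, Fin.card_Iio, Fintype.card_fin, hs]

end OrdLabel

section Shapley

variable {N : Type*} [DecidableEq N] {S A : Finset N} {i : N}

theorem preSet_eq_iff (π : {x // x ∈ S} ≃ Fin #S) (I : {x // x ∈ S}) (hA : A ⊆ S) :
    preSet S π I = A ↔ ({j | π j < π I} : Finset {x // x ∈ S}) = A.subtype (· ∈ S) := by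
  constructor
  · rintro rfl
    ext j
    simp [preSet]
  · intro h
    rw [preSet, ← univ_eq_attach, h]
    ext x
    simpa using fun hx => hA hx

theorem card_preSet_eq (hi : i ∈ S) (hA : A ⊆ S.erase i) :
    Fintype.card {π : {x // x ∈ S} ≃ Fin #S // preSet S π ⟨i, hi⟩ = A} =
      (#A).factorial * (#S - 1 - #A).factorial := by
  have hAS : A ⊆ S := hA.trans (erase_subset i S)
  have hiA : ⟨i, hi⟩ ∉ A.subtype (· ∈ S) := by simpa using fun h => by simpa using hA h
  rw [Fintype.card_congr (Equiv.subtypeEquivRight fun π => preSet_eq_iff π _ hAS),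
    card_filter_apply_lt_eq (Fintype.card_coe S) hiA, card_subtype, filter_true_of_mem hAS]

theorem sum_preSet {M : Type*} [AddCommMonoid M] (hi : i ∈ S) (g : Finset N → M) :
    ∑ π : {x // x ∈ S} ≃ Fin #S, g (preSet S π ⟨i, hi⟩) =
      ∑ A ∈ (S.erase i).powerset, ((#A).factorial * (#S - 1 - #A).factorial) • g A := by
  have hmaps : ∀ π ∈ (univ : Finset ({x // x ∈ S} ≃ Fin #S)),
      preSet S π ⟨i, hi⟩ ∈ (S.erase i).powerset := by
    intro π _
    refine mem_powerset.2 fun x hx => ?_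
    obtain ⟨j, hj, rfl⟩ := mem_image.1 hx
    exact mem_erase.2 ⟨fun h => (mem_filter.1 hj).2.ne (congrArg π (Subtype.ext h)), j.2⟩
  rw [← sum_fiberwise_of_maps_to hmaps]
  refine sum_congr rfl fun A hA => ?_
  rw [sum_congr rfl fun π hπ => congrArg g (mem_filter.1 hπ).2, sum_const,
    ← Fintype.card_subtype, card_preSet_eq hi (mem_powerset.1 hA)]

end Shapley

section Potential

variable {N : Type*} {C : Finset N → ℝ} {S : Finset N} {i : N}

noncomputable def shapleyWeight (s t : ℕ) : ℝ :=
  (s - t).factorial * (t - 1).factorial / s.factorial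

/-- The Hart–Mas-Colell potential of `C` on the coalition `S`. -/
noncomputable def shapleyPotential (C : Finset N → ℝ) (S : Finset N) : ℝ :=
  ∑ T ∈ S.powerset.filter (fun T => T.Nonempty), shapleyWeight #S #T * C T

theorem shapleyPotential_eq_sum_powerset (hC : C ∅ = 0) (S : Finset N) :
    shapleyPotential C S = ∑ T ∈ S.powerset, shapleyWeight #S #T * C T := by
  rw [shapleyPotential, sum_filter]
  refine sum_congr rfl fun T _ => ?_
  split_ifs with hT
  · rfl
  · rw [not_nonempty_iff_eq_empty.1 hT, hC, mul_zero]

theorem shapleyWeight_succ_sub {m a : ℕ} (ha : 1 ≤ a) (ham : a ≤ m) :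
    shapleyWeight (m + 1) a - shapleyWeight m a = -shapleyWeight (m + 1) (a + 1) := by
  obtain ⟨b, rfl⟩ : ∃ b, a = b + 1 := ⟨a - 1, by omega⟩
  obtain ⟨t, rfl⟩ : ∃ t, m = b + 1 + t := ⟨m - (b + 1), by omega⟩
  simp only [shapleyWeight, show b + 1 + t + 1 - (b + 1) = t + 1 by omega,
    show b + 1 + t - (b + 1) = t by omega, show b + 1 + t + 1 - (b + 1 + 1) = t by omega,
    Nat.add_sub_cancel]
  push_cast [Nat.factorial_succ]
  field_simp
  ring

variable [DecidableEq N]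

theorem shapley_eq_sum (hi : i ∈ S) :
    shapley C S i =
      ∑ A ∈ (S.erase i).powerset, shapleyWeight #S (#A + 1) * (C (insert i A) - C A) := by
  rw [shapley, dif_pos hi, sum_preSet hi fun A => C (A ∪ {i}) - C A, mul_sum]
  refine sum_congr rfl fun A _ => ?_
  rw [union_singleton, nsmul_eq_mul, shapleyWeight, Nat.add_sub_cancel, Nat.sub_sub, add_comm 1]
  push_cast
  ring

theorem shapley_insert_eq_shapleyPotential_sub (hC : C ∅ = 0) (hi : i ∉ S) :
    shapley C (insert i S) i = shapleyPotential C (insert i S) - shapleyPotential C S := by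
  rw [shapley_eq_sum (mem_insert_self i S), erase_insert hi, card_insert_of_notMem hi,
    shapleyPotential_eq_sum_powerset hC, shapleyPotential_eq_sum_powerset hC,
    sum_powerset_insert hi, card_insert_of_notMem hi, ← sum_add_distrib, ← sum_sub_distrib]
  refine sum_congr rfl fun A hA => ?_
  have hiA : i ∉ A := fun h => hi (mem_powerset.1 hA h)
  rw [card_insert_of_notMem hiA]
  obtain rfl | hA0 := A.eq_empty_or_nonempty
  · simp [hC]
  · have := shapleyWeight_succ_sub (card_pos.2 hA0) (card_le_card (mem_powerset.1 hA))
    linear_combination (-C A) * this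

theorem shapleyPotential_sub_shapley (hC : C ∅ = 0) (S : Finset N) (i : N) :
    shapleyPotential C S - shapley C S i = shapleyPotential C (S.erase i) := by
  by_cases hi : i ∈ S
  · have := shapley_insert_eq_shapleyPotential_sub hC (notMem_erase i S)
    rw [insert_erase hi] at this
    rw [this, sub_sub_cancel]
  · rw [shapley, dif_neg hi, erase_eq_of_notMem hi, sub_zero]

end Potential

section Game

variable {n : ℕ} {R : Type*} [DecidableEq R] {Cr : R → Finset (Fin n) → ℝ}

theorem users_update_erase (P : Fin n → Finset R) (i : Fin n) (Q : Finset R) (r : R) :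
    (users (Function.update P i Q) r).erase i = (users P r).erase i := by
  ext j
  by_cases hj : j = i <;> simp [users, hj]

variable [Fintype R]

theorem pot_eq_sum_shapleyPotential (P : Fin n → Finset R) :
    pot Cr P = ∑ r, shapleyPotential (Cr r) (users P r) :=
  rfl

theorem privCost_eq_sum (P : Fin n → Finset R) (i : Fin n) :
    privCost Cr P i = ∑ r, shapley (Cr r) (users P r) i :=
  sum_subset (subset_univ _) fun r _ hr => by
    rw [shapley, dif_neg (by simpa [users] using hr)]

theorem pot_sub_privCost (hC : ∀ r, Cr r ∅ = 0) (P : Fin n → Finset R) (i : Fin n) :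
    pot Cr P - privCost Cr P i = ∑ r, shapleyPotential (Cr r) ((users P r).erase i) := by
  rw [pot_eq_sum_shapleyPotential, privCost_eq_sum, ← sum_sub_distrib]
  exact sum_congr rfl fun r _ => shapleyPotential_sub_shapley (hC r) _ _

theorem pot_update_sub_privCost (hC : ∀ r, Cr r ∅ = 0) (P : Fin n → Finset R) (i : Fin n)
    (Q : Finset R) :
    pot Cr (Function.update P i Q) - privCost Cr (Function.update P i Q) i =
      pot Cr P - privCost Cr P i := by
  simp only [pot_sub_privCost hC, users_update_erase]

theorem isPNE_of_pot_le {Strat : Fin n → Set (Finset R)} (hC : ∀ r, Cr r ∅ = 0)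
    {P : Fin n → Finset R} (hP : ∀ i, P i ∈ Strat i)
    (hmin : ∀ Q : Fin n → Finset R, (∀ i, Q i ∈ Strat i) → pot Cr P ≤ pot Cr Q) :
    isPNE Strat Cr P := by
  refine ⟨hP, fun i Q hQ => ?_⟩
  have hfeas : ∀ j, Function.update P i Q j ∈ Strat j :=
    (Function.forall_update_iff P (p := fun j => (· ∈ Strat j))).2 ⟨hQ, fun j _ => hP j⟩
  have hdev := hmin _ hfeas
  linarith [pot_update_sub_privCost hC P i Q]

end Game

/-- Every Shapley cost sharing game has a pure Nash equilibrium; moreover any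
minimizer of the Shapley potential is a pure Nash equilibrium. -/
theorem shapley_pne_exists {n : ℕ} {R : Type*} [Fintype R] [DecidableEq R]
    (Strat : Fin n → Set (Finset R)) (Cr : R → Finset (Fin n) → ℝ)
    (hC0 : ∀ r, Cr r ∅ = 0)
    (hStrat : ∀ i, (Strat i).Nonempty) :
    (∃ P : Fin n → Finset R, isPNE Strat Cr P) ∧
      (∀ P : Fin n → Finset R, (∀ i, P i ∈ Strat i) →
        (∀ Q : Fin n → Finset R, (∀ i, Q i ∈ Strat i) → pot Cr P ≤ pot Cr Q) →
        isPNE Strat Cr P) := by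
  refine ⟨?_, fun P hP hmin => isPNE_of_pot_le hC0 hP hmin⟩
  obtain ⟨P, hP, hmin⟩ := Set.exists_min_image {P : Fin n → Finset R | ∀ i, P i ∈ Strat i}
    (pot Cr) (Set.toFinite _) ⟨fun i => (hStrat i).some, fun i => (hStrat i).some_mem⟩
  exact ⟨P, isPNE_of_pot_le hC0 hP hmin⟩
end

section
/- The price of anarchy of every n-player Shapley cost sharing game with submodular cost functions is at most n: if every C^r is submodular (C^r(X ∪ {i}) − C^r(X) ≥ C^r(Y ∪ {i}) − C^r(Y) for all X ⊆ Y ⊆ N, i ∈ N \ Y), nonnegative, nondecreasing, and C^r(∅) = 0, then every pure Nash equilibrium P satisfies C(P) ≤ n · C(Q) for every strategy vector Q. -/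
/-!
Shapley cost shares are efficient: for every ordering of `S` the marginal costs telescope to
`C S`, so the shares of the users of a resource add up to its cost, and the social cost is the
sum of the private costs. Submodularity bounds every marginal cost of `i`, hence its Shapley
share, by its stand-alone cost `C {i}`. At an equilibrium `P` each player pays at most what it
would pay by switching to `Q i`, which is at most `∑ r ∈ Q i, C^r {i} ≤ ∑ r ∈ Q i, C^r (Q^r)` by
monotonicity. Summing over the players counts each `C^r (Q^r)` once per user, at most `n` times.
-/

open Finset

section Shapley

variable {N : Type*} [DecidableEq N]

def initialSegment (S : Finset N) (π : {x // x ∈ S} ≃ Fin S.card) (m : ℕ) : Finset N :=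
  (S.attach.filter (fun j => (π j : ℕ) < m)).image Subtype.val

lemma initialSegment_zero (S : Finset N) (π : {x // x ∈ S} ≃ Fin S.card) :
    initialSegment S π 0 = ∅ := by
  simp [initialSegment]

lemma initialSegment_card (S : Finset N) (π : {x // x ∈ S} ≃ Fin S.card) :
    initialSegment S π S.card = S := by
  rw [initialSegment, filter_true_of_mem (fun j _ => (π j).isLt), attach_image_val]

lemma preSet_eq_initialSegment (S : Finset N) (π : {x // x ∈ S} ≃ Fin S.card)
    (i : {x // x ∈ S}) : preSet S π i = initialSegment S π (π i) :=
  rfl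

lemma notMem_preSet (S : Finset N) (π : {x // x ∈ S} ≃ Fin S.card) (i : {x // x ∈ S}) :
    (i : N) ∉ preSet S π i := by
  simp only [preSet, mem_image, mem_filter, not_exists]
  rintro j ⟨⟨-, hlt⟩, hji⟩
  rw [Subtype.ext hji] at hlt
  exact lt_irrefl _ hlt

lemma preSet_union_singleton (S : Finset N) (π : {x // x ∈ S} ≃ Fin S.card)
    (i : {x // x ∈ S}) : preSet S π i ∪ {(i : N)} = initialSegment S π (π i + 1) := by
  ext a
  simp only [preSet, initialSegment, mem_union, mem_singleton, mem_image, mem_filter,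
    mem_attach, true_and]
  constructor
  · rintro (⟨j, hj, rfl⟩ | rfl)
    · exact ⟨j, by omega, rfl⟩
    · exact ⟨i, by omega, rfl⟩
  · rintro ⟨j, hj, rfl⟩
    rcases (Nat.lt_succ_iff.mp hj).lt_or_eq with hlt | heq
    · exact Or.inl ⟨j, hlt, rfl⟩
    · exact Or.inr (by rw [π.injective (Fin.ext heq)])

lemma sum_marginal_preSet (C : Finset N → ℝ) (S : Finset N) (π : {x // x ∈ S} ≃ Fin S.card) :
    ∑ i ∈ S.attach, (C (preSet S π i ∪ {(i : N)}) - C (preSet S π i)) = C S - C ∅ := by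
  set f : ℕ → ℝ := fun m => C (initialSegment S π m)
  have hterm : ∀ i ∈ S.attach,
      C (preSet S π i ∪ {(i : N)}) - C (preSet S π i) = f (π i + 1) - f (π i) := by
    intro i _
    rw [preSet_union_singleton, preSet_eq_initialSegment]
  rw [sum_congr rfl hterm, ← univ_eq_attach,
    Equiv.sum_comp π (fun k : Fin S.card => f (k + 1) - f k),
    Fin.sum_univ_eq_sum_range (fun k => f (k + 1) - f k), sum_range_sub]
  simp only [f, initialSegment_card, initialSegment_zero]

lemma card_equiv_fin_card (S : Finset N) :
    Fintype.card ({x // x ∈ S} ≃ Fin S.card) = S.card.factorial := by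
  rw [Fintype.card_equiv (Fintype.equivFinOfCardEq (Fintype.card_coe S)), Fintype.card_coe]

lemma sum_shapley (C : Finset N → ℝ) (S : Finset N) : ∑ i ∈ S, shapley C S i = C S - C ∅ := by
  rw [← sum_attach S (shapley C S)]
  have hshapley : ∀ i ∈ S.attach, shapley C S i = (1 / (S.card.factorial : ℝ)) *
      ∑ π : {x // x ∈ S} ≃ Fin S.card, (C (preSet S π i ∪ {(i : N)}) - C (preSet S π i)) :=
    fun i _ => dif_pos i.2
  rw [sum_congr rfl hshapley, ← mul_sum, sum_comm]
  simp only [sum_marginal_preSet, sum_const, card_univ, card_equiv_fin_card, nsmul_eq_mul]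
  field_simp

lemma shapley_le_of_marginal_le (C : Finset N → ℝ) {S : Finset N} {i : N} (hi : i ∈ S) {b : ℝ}
    (hmarg : ∀ Y, i ∉ Y → C (insert i Y) - C Y ≤ b) : shapley C S i ≤ b := by
  rw [shapley, dif_pos hi]
  have hsum := sum_le_card_nsmul univ
    (fun π : {x // x ∈ S} ≃ Fin S.card => C (preSet S π ⟨i, hi⟩ ∪ {i}) - C (preSet S π ⟨i, hi⟩))
    b (fun π _ => by rw [union_singleton]; exact hmarg _ (notMem_preSet S π ⟨i, hi⟩))
  rw [card_univ, card_equiv_fin_card, nsmul_eq_mul] at hsum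
  rw [one_div_mul_eq_div, div_le_iff₀ (by positivity), mul_comm]
  exact hsum

end Shapley

section Game

variable {n : ℕ} {R : Type*} [DecidableEq R]

@[simp]
lemma mem_users {P : Fin n → Finset R} {r : R} {i : Fin n} : i ∈ users P r ↔ r ∈ P i := by
  simp [users]

lemma sum_sum_eq_sum_sum_users [Fintype R] (P : Fin n → Finset R) (g : R → Fin n → ℝ) :
    ∑ i, ∑ r ∈ P i, g r i = ∑ r, ∑ i ∈ users P r, g r i :=
  sum_comm' (fun i r => by simp)

lemma sum_privCost [Fintype R] (Cr : R → Finset (Fin n) → ℝ) (hC0 : ∀ r, Cr r ∅ = 0)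
    (P : Fin n → Finset R) : ∑ i, privCost Cr P i = socCost Cr P := by
  simp only [privCost, socCost, sum_sum_eq_sum_sum_users P, sum_shapley, hC0, sub_zero]

lemma privCost_le_sum_standalone (Cr : R → Finset (Fin n) → ℝ) (hC0 : ∀ r, Cr r ∅ = 0)
    (hsub : ∀ r (X Y : Finset (Fin n)) (i : Fin n), X ⊆ Y → i ∉ Y →
      Cr r (insert i Y) - Cr r Y ≤ Cr r (insert i X) - Cr r X)
    (P : Fin n → Finset R) (i : Fin n) : privCost Cr P i ≤ ∑ r ∈ P i, Cr r {i} := by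
  refine sum_le_sum fun r hr => shapley_le_of_marginal_le _ (mem_users.mpr hr) fun Y hiY => ?_
  simpa [hC0] using hsub r ∅ Y i (empty_subset Y) hiY

lemma sum_standalone_le_card_mul_socCost [Fintype R] (Cr : R → Finset (Fin n) → ℝ)
    (hnn : ∀ r T, 0 ≤ Cr r T) (hmono : ∀ r (T U : Finset (Fin n)), T ⊆ U → Cr r T ≤ Cr r U)
    (Q : Fin n → Finset R) : ∑ i, ∑ r ∈ Q i, Cr r {i} ≤ n * socCost Cr Q := by
  calc ∑ i, ∑ r ∈ Q i, Cr r {i}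
      ≤ ∑ i, ∑ r ∈ Q i, Cr r (users Q r) :=
        sum_le_sum fun i _ => sum_le_sum fun r hr =>
          hmono r _ _ (singleton_subset_iff.mpr (mem_users.mpr hr))
    _ = ∑ r, ((users Q r).card : ℝ) * Cr r (users Q r) := by
        rw [sum_sum_eq_sum_sum_users Q (fun r _ => Cr r (users Q r))]
        simp only [sum_const, nsmul_eq_mul]
    _ ≤ ∑ r, (n : ℝ) * Cr r (users Q r) := by
        gcongr with r
        · exact hnn r _
        · simpa using card_le_univ (users Q r)
    _ = n * socCost Cr Q := by rw [socCost, mul_sum]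

end Game

/-- The price of anarchy of Shapley cost sharing games with submodular costs
is at most `n`. -/
theorem poa_shapley_submodular {n : ℕ} {R : Type*} [Fintype R] [DecidableEq R]
    (Strat : Fin n → Set (Finset R)) (Cr : R → Finset (Fin n) → ℝ)
    (hC0 : ∀ r, Cr r ∅ = 0)
    (hnn : ∀ r T, 0 ≤ Cr r T)
    (hmono : ∀ r (T U : Finset (Fin n)), T ⊆ U → Cr r T ≤ Cr r U)
    (hsub : ∀ r (X Y : Finset (Fin n)) (i : Fin n), X ⊆ Y → i ∉ Y →
      Cr r (insert i Y) - Cr r Y ≤ Cr r (insert i X) - Cr r X)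
    (P : Fin n → Finset R) (hP : isPNE Strat Cr P)
    (Q : Fin n → Finset R) (hQ : ∀ i, Q i ∈ Strat i) :
    socCost Cr P ≤ (n : ℝ) * socCost Cr Q := by
  have hdeviate : ∀ i, privCost Cr P i ≤ ∑ r ∈ Q i, Cr r {i} := fun i => by
    calc privCost Cr P i ≤ privCost Cr (Function.update P i (Q i)) i := hP.2 i (Q i) (hQ i)
      _ ≤ ∑ r ∈ Function.update P i (Q i) i, Cr r {i} :=
          privCost_le_sum_standalone Cr hC0 hsub _ i
      _ = ∑ r ∈ Q i, Cr r {i} := by rw [Function.update_self]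
  calc socCost Cr P = ∑ i, privCost Cr P i := (sum_privCost Cr hC0 P).symm
    _ ≤ ∑ i, ∑ r ∈ Q i, Cr r {i} := sum_le_sum fun i _ => hdeviate i
    _ ≤ n * socCost Cr Q := sum_standalone_le_card_mul_socCost Cr hnn hmono Q
end
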